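/- The number of bicolored Motzkin paths of length n in which no umber horizontal step occurs at height zero equals the Catalan number C(n). -/
import Mathlib

inductive BStep : Type
  | U | D | Hu | Hd
deriving DecidableEq

def BStep.h : BStep → ℤ
  | .U => 1
  | .D => -1
  | .Hu => 0
  | .Hd => 0

/-- The height reached by a path (list of steps). -/
def hsum (p : List BStep) : ℤ := (p.map BStep.h).sum

/-- The path never goes below the x-axis. -/
def NonNegPath (p : List BStep) : Prop := ∀ k : ℕ, 0 ≤ hsum (p.take k)

/-- Restriction (1): no umber horizontal step occurs at height zero. -/
def Res1 (p : List BStep) : Prop :=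
  ∀ (i : ℕ) (hi : i < p.length), p.get ⟨i, hi⟩ = BStep.Hu → 0 < hsum (p.take i)

/-- Restriction (2): no denim horizontal step occurs before the first down step. -/
def Res2 (p : List BStep) : Prop :=
  ∀ (i : ℕ) (hi : i < p.length), p.get ⟨i, hi⟩ = BStep.Hd →
    ∃ (j : ℕ) (hj : j < p.length), j < i ∧ p.get ⟨j, hj⟩ = BStep.D

/-- A bicolored Motzkin path of length `n`: from (0,0) to (n,0), never below the x-axis. -/
def IsBMotzkin (n : ℕ) (p : List BStep) : Prop :=
  p.length = n ∧ hsum p = 0 ∧ NonNegPath p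

namespace BMAux

open DyckStep

/-- encode one Motzkin step as two Dyck steps -/
def f : BStep → List DyckStep
  | .U => [U, U]
  | .D => [D, D]
  | .Hu => [D, U]
  | .Hd => [U, D]

/-- decode two Dyck steps as one Motzkin step -/
def g : DyckStep → DyckStep → BStep
  | U, U => .U
  | D, D => .D
  | D, U => .Hu
  | U, D => .Hd

def enc (p : List BStep) : List DyckStep := p.flatMap f

def dec : List DyckStep → List BStep
  | [] => []
  | [_] => []
  | a :: b :: r => g a b :: dec r

/-- signed height of a Dyck step -/
def ds : DyckStep → ℤ
  | U => 1
  | D => -1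

def dh (l : List DyckStep) : ℤ := (l.map ds).sum

lemma length_f (s : BStep) : (f s).length = 2 := by cases s <;> rfl

lemma dh_f (s : BStep) : dh (f s) = 2 * s.h := by cases s <;> simp [f, dh, ds, BStep.h]

@[simp] lemma enc_nil : enc [] = [] := rfl

@[simp] lemma enc_cons (s : BStep) (t : List BStep) : enc (s :: t) = f s ++ enc t := rfl

@[simp] lemma dh_nil : dh [] = 0 := rfl

lemma dh_append (l₁ l₂ : List DyckStep) : dh (l₁ ++ l₂) = dh l₁ + dh l₂ := by
  simp [dh]

lemma hsum_append (l₁ l₂ : List BStep) : hsum (l₁ ++ l₂) = hsum l₁ + hsum l₂ := by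
  simp [hsum]

@[simp] lemma hsum_nil : hsum [] = 0 := rfl

lemma hsum_cons (s : BStep) (t : List BStep) : hsum (s :: t) = s.h + hsum t := by
  simp [hsum]

lemma dh_enc (p : List BStep) : dh (enc p) = 2 * hsum p := by
  induction p with
  | nil => rfl
  | cons s t ih => rw [enc_cons, dh_append, dh_f, ih, hsum_cons]; ring

lemma length_enc (p : List BStep) : (enc p).length = 2 * p.length := by
  induction p with
  | nil => rfl
  | cons s t ih => simp [ih, length_f]; ring

lemma count_sub (l : List DyckStep) : (l.count U : ℤ) - l.count D = dh l := by
  induction l with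
  | nil => rfl
  | cons a t ih =>
    cases a <;> simp [List.count_cons, dh, ds, hsum] at * <;> push_cast <;> omega

lemma count_add (l : List DyckStep) : l.count U + l.count D = l.length := by
  induction l with
  | nil => rfl
  | cons a t ih => cases a <;> simp [List.count_cons] <;> omega

lemma enc_take (p : List BStep) (i : ℕ) : (enc p).take (2 * i) = enc (p.take i) := by
  induction p generalizing i with
  | nil => simp
  | cons s t ih =>
    cases i with
    | zero => simp
    | succ j =>
      rw [enc_cons, List.take_append, length_f,
        List.take_of_length_le (by rw [length_f]; omega)]
      have : 2 * (j + 1) - 2 = 2 * j := by omega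
      rw [this, ih, List.take_succ_cons, enc_cons]

lemma enc_take_odd (p : List BStep) (i : ℕ) (hi : i < p.length) :
    (enc p).take (2 * i + 1) = enc (p.take i) ++ (f (p.get ⟨i, hi⟩)).take 1 := by
  induction p generalizing i with
  | nil => simp at hi
  | cons s t ih =>
    cases i with
    | zero =>
      rw [enc_cons, List.take_append]
      simp only [List.take_zero, List.take_nil, enc_nil, List.nil_append]
      rw [show 1 - (f s).length = 0 by rw [length_f], List.take_zero, List.append_nil]
      rfl
    | succ j =>
      rw [enc_cons, List.take_append, length_f,
        List.take_of_length_le (by rw [length_f]; omega)]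
      have : 2 * (j + 1) + 1 - 2 = 2 * j + 1 := by omega
      rw [this, ih j (by simpa using Nat.lt_of_succ_lt_succ hi), List.take_succ_cons, enc_cons,
        List.append_assoc]
      rfl

lemma hsum_take_succ (p : List BStep) (i : ℕ) (hi : i < p.length) :
    hsum (p.take (i + 1)) = hsum (p.take i) + (p.get ⟨i, hi⟩).h := by
  rw [List.take_succ]
  have : p[i]? = some (p.get ⟨i, hi⟩) := by
    rw [List.getElem?_eq_getElem hi]; rfl
  rw [this, hsum_append]
  simp [hsum]

lemma f_g (a b : DyckStep) : f (g a b) = [a, b] := by cases a <;> cases b <;> rfl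

lemma g_f (s : BStep) : g (f s).head! (f s).tail.head! = s := by cases s <;> rfl

lemma dec_enc (p : List BStep) : dec (enc p) = p := by
  induction p with
  | nil => rfl
  | cons s t ih =>
    have hfs : f s ++ enc t = (f s).head! :: (f s).tail.head! :: enc t := by
      cases s <;> rfl
    rw [enc_cons, hfs, dec, g_f, ih]

lemma enc_dec (w : List DyckStep) (hw : w.length % 2 = 0) : enc (dec w) = w := by
  induction w using dec.induct with
  | case1 => rfl
  | case2 a => simp at hw
  | case3 a b r ih =>
    rw [dec, enc_cons, f_g, ih (by simp [List.length_cons] at hw; omega)]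
    rfl

/-- prefix heights of the encoding are nonnegative -/
lemma enc_prefix_nonneg (p : List BStep) (hnn : NonNegPath p) (hr : Res1 p) (k : ℕ) :
    0 ≤ dh ((enc p).take k) := by
  rcases le_or_gt (enc p).length k with h | h
  · rw [List.take_of_length_le h, dh_enc]
    have := hnn p.length
    rw [List.take_length] at this
    omega
  · rcases Nat.even_or_odd k with ⟨i, hk⟩ | ⟨i, hk⟩
    · subst hk
      rw [show i + i = 2 * i by ring, enc_take, dh_enc]
      have := hnn i
      omega
    · subst hk
      have hi : i < p.length := by
        rw [length_enc] at h; omega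
      rw [enc_take_odd p i hi, dh_append, dh_enc]
      have h1 := hnn i
      set s := p.get ⟨i, hi⟩ with hs
      cases hsv : s
      · simp [f, dh, ds]; omega
      · -- s = D : height after step ≥ 0 so height before ≥ 1
        have h2 := hnn (i + 1)
        rw [hsum_take_succ p i hi, ← hs, hsv] at h2
        simp only [BStep.h] at h2
        simp [f, dh, ds]; omega
      · -- s = Hu : Res1
        have h2 := hr i hi (by rw [← hs, hsv])
        simp [f, dh, ds]; omega
      · simp [f, dh, ds]; omega

/-- prefix heights of a Dyck-like word are nonnegative, from the count condition -/
lemma dh_take_nonneg (w : DyckWord) (k : ℕ) : 0 ≤ dh ((w.toList).take k) := by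
  have h := w.count_D_le_count_U k
  have := count_sub ((w.toList).take k)
  omega

def toDyck (p : List BStep) (hp : hsum p = 0) (hnn : NonNegPath p) (hr : Res1 p) : DyckWord where
  toList := enc p
  count_U_eq_count_D := by
    have h1 := count_sub (enc p)
    rw [dh_enc, hp] at h1
    omega
  count_D_le_count_U i := by
    have := enc_prefix_nonneg p hnn hr i
    have h2 := count_sub ((enc p).take i)
    omega

lemma semilength_toDyck (p : List BStep) (hp : hsum p = 0) (hnn : NonNegPath p) (hr : Res1 p) :
    (toDyck p hp hnn hr).semilength = p.length := by
  have h := (toDyck p hp hnn hr).two_mul_semilength_eq_length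
  have h2 : (toDyck p hp hnn hr).toList.length = 2 * p.length := length_enc p
  omega

lemma dyck_length_even (w : DyckWord) : w.toList.length % 2 = 0 := by
  have := w.two_mul_semilength_eq_length
  omega

lemma length_dec (w : List DyckStep) (hw : w.length % 2 = 0) :
    (dec w).length = w.length / 2 := by
  have : (enc (dec w)).length = 2 * (dec w).length := length_enc _
  rw [enc_dec w hw] at this
  omega

lemma dec_isMotzkin (w : DyckWord) :
    hsum (dec w.toList) = 0 ∧ NonNegPath (dec w.toList) ∧ Res1 (dec w.toList) := by
  set p := dec w.toList with hpdef
  have hew : enc p = w.toList := enc_dec _ (dyck_length_even w)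
  have htot : dh w.toList = 0 := by
    have h1 := count_sub w.toList
    have h2 := w.count_U_eq_count_D
    omega
  refine ⟨?_, ?_, ?_⟩
  · have := dh_enc p
    rw [hew, htot] at this
    omega
  · intro k
    have h1 := dh_take_nonneg w (2 * k)
    rw [← hew, enc_take, dh_enc] at h1
    omega
  · intro i hi hHu
    have h1 := dh_take_nonneg w (2 * i + 1)
    rw [← hew, enc_take_odd p i hi, dh_append, dh_enc, hHu] at h1
    simp [f, dh, ds] at h1
    omega

/-- the bijection -/
def bij (n : ℕ) : {p : List BStep // IsBMotzkin n p ∧ Res1 p} ≃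
    {w : DyckWord // w.semilength = n} where
  toFun := fun q =>
    ⟨toDyck q.1 q.2.1.2.1 q.2.1.2.2 q.2.2, by rw [semilength_toDyck, q.2.1.1]⟩
  invFun := fun ⟨w, hw⟩ =>
    ⟨dec w.toList, by
      obtain ⟨h0, hnn, hr⟩ := dec_isMotzkin w
      refine ⟨⟨?_, h0, hnn⟩, hr⟩
      have := length_dec w.toList (dyck_length_even w)
      have h2 := w.two_mul_semilength_eq_length
      omega⟩
  left_inv := fun q => Subtype.ext (dec_enc q.1)
  right_inv := fun q => Subtype.ext (DyckWord.ext (enc_dec q.1.toList (dyck_length_even q.1)))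

end BMAux

theorem bicolored_motzkin_res1_count (n : ℕ) :
    Nat.card {p : List BStep // IsBMotzkin n p ∧ Res1 p} = catalan n := by
  rw [Nat.card_congr (BMAux.bij n), Nat.card_eq_fintype_card,
    DyckWord.card_dyckWord_semilength_eq_catalan]
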